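/- arXiv:2305.10199 — 3 statements merged into one kernel-verified Lean document; each statement's English description precedes it below -/
import Mathlib

section
/- If q is a monic real polynomial with n-1 distinct real zeros s_1 < ... < s_{n-1}, λ_ℓ > 0 for each ℓ, and p(t) = (t - s)q(t) - Σ_ℓ λ_ℓ q(t)/(t - s_ℓ) (i.e. p/q = t - s - Σ λ_ℓ/(t - s_ℓ)), then the function p/q is strictly increasing on each of the n intervals determined by the zeros of q and p has exactly one zero in each such interval. -/
/-!
Off the poles, `p / q = f` with `f t = t - s₀ - ∑ λₗ / (t - sₗ)`. On each gap between consecutive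
poles every `t - sₗ` keeps its sign, so each term `-λₗ / (t - sₗ)` is monotone and `f` is strictly
increasing. At the left end of a gap `f → -∞` (linear growth at `-∞`, or a pole with positive
`λ` from the right), and at the right end `f → +∞`, so by the intermediate value theorem `f`,
hence `p = q f`, has exactly one zero in the gap.
-/

open Polynomial Finset Filter Topology

section QuotientFun

variable {ι : Type*} [Fintype ι]

/-- `p / q` in partial-fraction form, `t - s₀ - ∑ λᵢ / (t - aᵢ)`. -/
noncomputable def quotientFun (s₀ : ℝ) (a lam : ι → ℝ) (t : ℝ) : ℝ :=
  t - s₀ - ∑ i, lam i / (t - a i)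

theorem eval_eq_prod_mul_quotientFun [DecidableEq ι] (s₀ : ℝ) (a lam : ι → ℝ) {t : ℝ}
    (ht : ∀ i, t ≠ a i) :
    ((X - C s₀) * ∏ i, (X - C (a i)) - ∑ i, C (lam i) * ∏ m ∈ univ.erase i, (X - C (a m))).eval t =
      (∏ i, (t - a i)) * quotientFun s₀ a lam t := by
  have hterm : ∀ i, lam i * ∏ m ∈ univ.erase i, (t - a m) =
      (∏ m, (t - a m)) * (lam i / (t - a i)) := by
    intro i
    rw [← mul_prod_erase univ (fun m => t - a m) (mem_univ i)]
    field_simp [sub_ne_zero.2 (ht i)]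
  simp only [eval_sub, eval_mul, eval_prod, eval_finsetSum, eval_X, eval_C, hterm, quotientFun,
    mul_sub, ← mul_sum]
  ring

theorem antitoneOn_const_div_sub {c a : ℝ} (hc : 0 ≤ c) {D : Set ℝ}
    (hD : D ⊆ Set.Ioi a ∨ D ⊆ Set.Iio a) : AntitoneOn (fun t => c / (t - a)) D := by
  intro x hx y hy hxy
  rcases hD with hD | hD
  · exact div_le_div_of_nonneg_left hc (sub_pos.2 (hD hx)) (by linarith)
  · have := one_div_le_one_div_of_neg_of_le (sub_neg.2 (hD hy)) (sub_le_sub_right hxy a)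
    simpa only [mul_one_div] using mul_le_mul_of_nonneg_left this hc

theorem strictMonoOn_quotientFun (s₀ : ℝ) {a lam : ι → ℝ} (hlam : ∀ i, 0 ≤ lam i) {D : Set ℝ}
    (hD : ∀ i, D ⊆ Set.Ioi (a i) ∨ D ⊆ Set.Iio (a i)) :
    StrictMonoOn (quotientFun s₀ a lam) D := by
  intro x hx y hy hxy
  have := sum_le_sum fun i (_ : i ∈ univ) => antitoneOn_const_div_sub (hlam i) (hD i) hx hy hxy.le
  simp only [quotientFun]
  linarith

theorem continuousOn_quotientFun (s₀ : ℝ) (a lam : ι → ℝ) {D : Set ℝ}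
    (hD : ∀ t ∈ D, ∀ i, t ≠ a i) : ContinuousOn (quotientFun s₀ a lam) D := by
  unfold quotientFun
  fun_prop (disch := exact fun t ht => sub_ne_zero.2 (hD t ht _))

theorem tendsto_quotientFun_atBot (s₀ : ℝ) (a lam : ι → ℝ) :
    Tendsto (quotientFun s₀ a lam) atBot atBot := by
  have hsum : Tendsto (fun t => ∑ i, lam i / (t - a i)) atBot (𝓝 0) := by
    simpa using tendsto_finsetSum univ fun i _ => tendsto_const_nhds.div_atBot
      ((tendsto_atBot_add_const_right _ (-a i) tendsto_id).congr fun t =>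
        (sub_eq_add_neg t (a i)).symm)
  exact (tendsto_id.atBot_add ((tendsto_const_nhds (x := -s₀)).sub hsum)).congr fun t => by
    simp only [id_eq, quotientFun]; ring

theorem tendsto_quotientFun_atTop (s₀ : ℝ) (a lam : ι → ℝ) :
    Tendsto (quotientFun s₀ a lam) atTop atTop := by
  have hsum : Tendsto (fun t => ∑ i, lam i / (t - a i)) atTop (𝓝 0) := by
    simpa using tendsto_finsetSum univ fun i _ => tendsto_const_nhds.div_atTop
      ((tendsto_atTop_add_const_right _ (-a i) tendsto_id).congr fun t =>
        (sub_eq_add_neg t (a i)).symm)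
  exact (tendsto_id.atTop_add ((tendsto_const_nhds (x := -s₀)).sub hsum)).congr fun t => by
    simp only [id_eq, quotientFun]; ring

theorem tendsto_const_div_sub_nhdsGT {c : ℝ} (hc : 0 < c) (a : ℝ) :
    Tendsto (fun t => c / (t - a)) (𝓝[>] a) atTop := by
  have hsub : Tendsto (fun t => t - a) (𝓝[>] a) (𝓝[>] 0) :=
    tendsto_nhdsWithin_of_tendsto_nhds_of_eventually_within _
      ((continuous_sub_right a).tendsto' a 0 (sub_self a) |>.mono_left nhdsWithin_le_nhds)
      (eventually_nhdsWithin_of_forall fun t ht => show 0 < t - a from sub_pos.2 ht)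
  simpa only [div_eq_mul_inv, Function.comp_def] using
    (tendsto_inv_nhdsGT_zero.comp hsub).const_mul_atTop hc

theorem tendsto_const_div_sub_nhdsLT {c : ℝ} (hc : 0 < c) (a : ℝ) :
    Tendsto (fun t => c / (t - a)) (𝓝[<] a) atBot := by
  have hsub : Tendsto (fun t => t - a) (𝓝[<] a) (𝓝[<] 0) :=
    tendsto_nhdsWithin_of_tendsto_nhds_of_eventually_within _
      ((continuous_sub_right a).tendsto' a 0 (sub_self a) |>.mono_left nhdsWithin_le_nhds)
      (eventually_nhdsWithin_of_forall fun t ht => show t - a < 0 from sub_neg.2 ht)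
  simpa only [div_eq_mul_inv, Function.comp_def] using
    (tendsto_inv_nhdsLT_zero.comp hsub).const_mul_atBot hc

theorem quotientFun_eq_sub_div [DecidableEq ι] (s₀ : ℝ) (a lam : ι → ℝ) (j : ι) (t : ℝ) :
    quotientFun s₀ a lam t =
      t - s₀ - ∑ i ∈ univ.erase j, lam i / (t - a i) - lam j / (t - a j) := by
  rw [quotientFun, ← sum_erase_add _ _ (mem_univ j)]
  ring

theorem tendsto_sub_sum_erase_div [DecidableEq ι] (s₀ : ℝ) {a : ι → ℝ}
    (ha : Function.Injective a) (lam : ι → ℝ) (j : ι) :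
    Tendsto (fun t => t - s₀ - ∑ i ∈ univ.erase j, lam i / (t - a i)) (𝓝 (a j))
      (𝓝 (a j - s₀ - ∑ i ∈ univ.erase j, lam i / (a j - a i))) := by
  refine (tendsto_id.sub tendsto_const_nhds).sub (tendsto_finsetSum _ fun i hi => ?_)
  exact tendsto_const_nhds.div (tendsto_id.sub tendsto_const_nhds)
    (sub_ne_zero.2 fun h => (mem_erase.1 hi).1 (ha h).symm)

theorem tendsto_quotientFun_nhdsGT (s₀ : ℝ) {a lam : ι → ℝ} (ha : Function.Injective a) {j : ι}
    (hj : 0 < lam j) : Tendsto (quotientFun s₀ a lam) (𝓝[>] a j) atBot := by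
  classical
  refine (((tendsto_sub_sum_erase_div s₀ ha lam j).mono_left nhdsWithin_le_nhds).add_atBot
    (tendsto_neg_atTop_atBot.comp (tendsto_const_div_sub_nhdsGT hj (a j)))).congr fun t => ?_
  simp only [Function.comp, quotientFun_eq_sub_div s₀ a lam j]
  ring

theorem tendsto_quotientFun_nhdsLT (s₀ : ℝ) {a lam : ι → ℝ} (ha : Function.Injective a) {j : ι}
    (hj : 0 < lam j) : Tendsto (quotientFun s₀ a lam) (𝓝[<] a j) atTop := by
  classical
  refine (((tendsto_sub_sum_erase_div s₀ ha lam j).mono_left nhdsWithin_le_nhds).add_atTop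
    (tendsto_neg_atBot_atTop.comp (tendsto_const_div_sub_nhdsLT hj (a j)))).congr fun t => ?_
  simp only [Function.comp, quotientFun_eq_sub_div s₀ a lam j]
  ring

end QuotientFun

theorem IsPreconnected.existsUnique_eq_of_strictMonoOn {α β : Type*} [LinearOrder α]
    [TopologicalSpace α] [LinearOrder β] [TopologicalSpace β] [OrderClosedTopology β]
    {D : Set α} (hD : IsPreconnected D) {f : α → β} (hf : ContinuousOn f D)
    (hmono : StrictMonoOn f D) {a b : α} (ha : a ∈ D) (hb : b ∈ D) {y : β} (hya : f a ≤ y)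
    (hyb : y ≤ f b) : ∃! t, t ∈ D ∧ f t = y := by
  obtain ⟨t, ht, hft⟩ := hD.intermediate_value ha hb hf ⟨hya, hyb⟩
  exact ⟨t, ⟨ht, hft⟩, fun u ⟨hu, hfu⟩ => hmono.injOn hu ht (hfu.trans hft.symm)⟩

section Gap

variable {k : ℕ} (s : Fin k → ℝ)

/-- For increasing `s`, `gap s 0, …, gap s k` are the intervals
`(-∞, s 0), (s 0, s 1), …, (s (k-1), ∞)`. -/
def gap (ℓ : ℕ) : Set ℝ :=
  {t : ℝ | ∀ m : Fin k, ((m : ℕ) < ℓ → s m < t) ∧ (ℓ ≤ (m : ℕ) → t < s m)}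

theorem gap_subset_Ioi_or_Iio (ℓ : ℕ) (m : Fin k) :
    gap s ℓ ⊆ Set.Ioi (s m) ∨ gap s ℓ ⊆ Set.Iio (s m) := by
  by_cases h : (m : ℕ) < ℓ
  · exact Or.inl fun t ht => (ht m).1 h
  · exact Or.inr fun t ht => (ht m).2 (not_lt.1 h)

theorem ordConnected_gap (ℓ : ℕ) : (gap s ℓ).OrdConnected :=
  ⟨fun _ hx _ hy _ ht m =>
    ⟨fun h => ((hx m).1 h).trans_le ht.1, fun h => ht.2.trans_lt ((hy m).2 h)⟩⟩

theorem eventually_mem_gap_zero_atBot : ∀ᶠ t in atBot, t ∈ gap s 0 := by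
  filter_upwards [eventually_all.2 fun m => eventually_lt_atBot (s m)] with t ht m
  exact ⟨fun h => absurd h (Nat.not_lt_zero _), fun _ => ht m⟩

theorem eventually_mem_gap_atTop : ∀ᶠ t in atTop, t ∈ gap s k := by
  filter_upwards [eventually_all.2 fun m => eventually_gt_atTop (s m)] with t ht m
  exact ⟨fun _ => ht m, fun h => absurd h (not_le.2 m.isLt)⟩

variable {s}

theorem eventually_mem_gap_succ_nhdsGT (hs : StrictMono s) (j : Fin k) :
    ∀ᶠ t in 𝓝[>] s j, t ∈ gap s (j + 1) := by
  have hright : ∀ᶠ t in 𝓝 (s j), ∀ m, j < m → t < s m := eventually_all.2 fun m =>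
    if h : j < m then (eventually_lt_nhds (hs h)).mono fun _ ht _ => ht
    else .of_forall fun _ h' => absurd h' h
  filter_upwards [self_mem_nhdsWithin, nhdsWithin_le_nhds hright] with t (hjt : s j < t) hlt m
  exact ⟨fun h => (hs.monotone (Fin.le_def.2 (Nat.lt_succ_iff.1 h))).trans_lt hjt,
    fun h => hlt m (Fin.lt_def.2 h)⟩

theorem eventually_mem_gap_nhdsLT (hs : StrictMono s) (j : Fin k) :
    ∀ᶠ t in 𝓝[<] s j, t ∈ gap s j := by
  have hleft : ∀ᶠ t in 𝓝 (s j), ∀ m, m < j → s m < t := eventually_all.2 fun m =>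
    if h : m < j then (eventually_gt_nhds (hs h)).mono fun _ ht _ => ht
    else .of_forall fun _ h' => absurd h' h
  filter_upwards [self_mem_nhdsWithin, nhdsWithin_le_nhds hleft] with t (htj : t < s j) hgt m
  exact ⟨fun h => hgt m (Fin.lt_def.2 h), fun h => htj.trans_le (hs.monotone (Fin.le_def.2 h))⟩

theorem exists_mem_gap_quotientFun_neg (s₀ : ℝ) (hs : StrictMono s) {lam : Fin k → ℝ}
    (hlam : ∀ i, 0 < lam i) (ℓ : Fin (k + 1)) : ∃ t ∈ gap s ℓ, quotientFun s₀ s lam t < 0 := by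
  induction ℓ using Fin.cases with
  | zero => exact ((eventually_mem_gap_zero_atBot s).and
      ((tendsto_quotientFun_atBot s₀ s lam).eventually_lt_atBot 0)).exists
  | succ j => exact ((eventually_mem_gap_succ_nhdsGT hs j).and
      ((tendsto_quotientFun_nhdsGT s₀ hs.injective (hlam j)).eventually_lt_atBot 0)).exists

theorem exists_mem_gap_quotientFun_pos (s₀ : ℝ) (hs : StrictMono s) {lam : Fin k → ℝ}
    (hlam : ∀ i, 0 < lam i) (ℓ : Fin (k + 1)) : ∃ t ∈ gap s ℓ, 0 < quotientFun s₀ s lam t := by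
  induction ℓ using Fin.lastCases with
  | last => exact ((eventually_mem_gap_atTop s).and
      ((tendsto_quotientFun_atTop s₀ s lam).eventually_gt_atTop 0)).exists
  | cast j => exact ((eventually_mem_gap_nhdsLT hs j).and
      ((tendsto_quotientFun_nhdsLT s₀ hs.injective (hlam j)).eventually_gt_atTop 0)).exists

end Gap

theorem strictMonoOn_quotient_and_unique_zero_in_each_interval
    {k : ℕ} (s₀ : ℝ) (s : Fin k → ℝ) (hs : StrictMono s)
    (lam : Fin k → ℝ) (hlam : ∀ ℓ, 0 < lam ℓ)
    (q p : Polynomial ℝ)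
    (hq : q = ∏ ℓ : Fin k, (X - C (s ℓ)))
    (hp : p = (X - C s₀) * q - ∑ ℓ : Fin k, C (lam ℓ) * ∏ m ∈ univ.erase ℓ, (X - C (s m)))
    -- the `n` open intervals determined by the zeros of `q`:
    (I : Fin (k + 1) → Set ℝ)
    (hI : ∀ ℓ : Fin (k + 1), I ℓ =
      {t : ℝ | ∀ m : Fin k, ((m : ℕ) < (ℓ : ℕ) → s m < t) ∧ ((ℓ : ℕ) ≤ (m : ℕ) → t < s m)}) :
    ∀ ℓ : Fin (k + 1),
      StrictMonoOn (fun t : ℝ => p.eval t / q.eval t) (I ℓ) ∧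
      (∃! t : ℝ, t ∈ I ℓ ∧ p.eval t = 0) := by
  intro ℓ
  rw [hI ℓ]
  change StrictMonoOn _ (gap s ℓ) ∧ ∃! t, t ∈ gap s ℓ ∧ _
  have hpole : ∀ t ∈ gap s ℓ, ∀ m, t ≠ s m := fun t ht m =>
    (gap_subset_Ioi_or_Iio s ℓ m).elim (fun h => (h ht).ne') (fun h => (h ht).ne)
  have hq0 : ∀ t ∈ gap s ℓ, q.eval t ≠ 0 := fun t ht => by
    simpa [hq, eval_prod, prod_eq_zero_iff, sub_eq_zero] using hpole t ht
  have hpq : ∀ t ∈ gap s ℓ, p.eval t = q.eval t * quotientFun s₀ s lam t := fun t ht => by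
    simpa [hp, hq, eval_prod] using eval_eq_prod_mul_quotientFun s₀ s lam (hpole t ht)
  have hmono := strictMonoOn_quotientFun s₀ (fun i => (hlam i).le) (gap_subset_Ioi_or_Iio s ℓ)
  obtain ⟨a, ha, hfa⟩ := exists_mem_gap_quotientFun_neg s₀ hs hlam ℓ
  obtain ⟨b, hb, hfb⟩ := exists_mem_gap_quotientFun_pos s₀ hs hlam ℓ
  obtain ⟨c, ⟨hc, hfc⟩, huniq⟩ :=
    (ordConnected_gap s ℓ).isPreconnected.existsUnique_eq_of_strictMonoOn
      (continuousOn_quotientFun s₀ s lam hpole) hmono ha hb hfa.le hfb.le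
  refine ⟨hmono.congr fun t ht => ?_, c, ⟨hc, by rw [hpq c hc, hfc, mul_zero]⟩,
    fun t ⟨ht, hpt⟩ => ?_⟩
  · rw [hpq t ht, mul_div_cancel_left₀ _ (hq0 t ht)]
  · rw [hpq t ht] at hpt
    exact huniq t ⟨ht, (mul_eq_zero.1 hpt).resolve_left (hq0 t ht)⟩
end

section
/- Let A and B be real symmetric m×m matrices and suppose |θ_ℓ(A) - θ_ℓ(B)| = ‖A - B‖_op for some index ℓ. Then there exists a nonzero vector v lying in the span of the top and bottom eigenspaces of A - B that is simultaneously an eigenvector of A with eigenvalue θ_ℓ(A) and of B with eigenvalue θ_ℓ(B). -/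
/-!
Suppose `θ_ℓ(A) ≥ θ_ℓ(B)`; the other case is the same with `A` and `B` exchanged. The span of the
eigenvectors of `A` for `θ_1(A), …, θ_ℓ(A)` and the span of those of `B` for
`θ_ℓ(B), …, θ_m(B)` have dimensions adding up to `m + 1`, so they share a vector `v ≠ 0`. The
Rayleigh quotient of `v` is at least `θ_ℓ(A)` for `A` and at most `θ_ℓ(B)` for `B`, while for
`A - B` it is at most `‖A - B‖ = θ_ℓ(A) - θ_ℓ(B)`. Hence both bounds are attained, and on the
span of eigenvectors whose eigenvalues lie on one side of a value, attaining that value forces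
`v` to be an eigenvector. Finally `‖A - B‖` is then an eigenvalue of `A - B` that bounds all of
its Rayleigh quotients, i.e. its top eigenvalue.
-/

open Polynomial Matrix Finset

/-- The operator (spectral) norm of a real square matrix, acting on Euclidean space. -/
noncomputable def opNorm {m : ℕ} (M : Matrix (Fin m) (Fin m) ℝ) : ℝ :=
  ‖(Matrix.toEuclideanLin M).toContinuousLinearMap‖

open Module Module.End Submodule
open scoped RealInnerProductSpace

variable {E : Type*} [NormedAddCommGroup E] [InnerProductSpace ℝ E]

namespace Orthonormal

variable {ι : Type*} [Fintype ι] {e : ι → E} {T : E →ₗ[ℝ] E} {μ : ι → ℝ}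

theorem inner_apply_sum_smul_eq (he : Orthonormal ℝ e) (hTe : ∀ i, T (e i) = μ i • e i)
    (c : ι → ℝ) : ⟪T (∑ i, c i • e i), ∑ i, c i • e i⟫ = ∑ i, μ i * c i ^ 2 := by
  have hT : T (∑ i, c i • e i) = ∑ i, (μ i * c i) • e i := by
    simp only [map_sum, map_smul, hTe, smul_smul, mul_comm]
  rw [hT, he.inner_sum]
  simp only [conj_trivial]
  exact Finset.sum_congr rfl fun i _ => by ring

theorem inner_apply_self_nonneg_of_mem_span (he : Orthonormal ℝ e)
    (hTe : ∀ i, T (e i) = μ i • e i) (hμ : ∀ i, 0 ≤ μ i) {v : E}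
    (hv : v ∈ span ℝ (Set.range e)) : 0 ≤ ⟪T v, v⟫ := by
  obtain ⟨c, rfl⟩ := mem_span_range_iff_exists_fun ℝ |>.1 hv
  rw [he.inner_apply_sum_smul_eq hTe]
  exact Finset.sum_nonneg fun i _ => mul_nonneg (hμ i) (sq_nonneg _)

theorem apply_eq_zero_of_inner_apply_self_eq_zero (he : Orthonormal ℝ e)
    (hTe : ∀ i, T (e i) = μ i • e i) (hμ : ∀ i, 0 ≤ μ i) {v : E}
    (hv : v ∈ span ℝ (Set.range e)) (h : ⟪T v, v⟫ = 0) : T v = 0 := by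
  obtain ⟨c, rfl⟩ := mem_span_range_iff_exists_fun ℝ |>.1 hv
  rw [he.inner_apply_sum_smul_eq hTe,
    Finset.sum_eq_zero_iff_of_nonneg fun i _ => mul_nonneg (hμ i) (sq_nonneg _)] at h
  have hμc : ∀ i, μ i * c i = 0 := fun i => by
    rcases mul_eq_zero.1 (h i (mem_univ i)) with h0 | h0
    · simp [h0]
    · simp [pow_eq_zero_iff two_ne_zero |>.1 h0]
  simp [map_sum, map_smul, hTe, smul_smul, mul_comm, hμc]

end Orthonormal

theorem LinearIndependent.exists_ne_zero_mem_span_inter {K V ι κ : Type*} [Field K]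
    [AddCommGroup V] [Module K V] [FiniteDimensional K V] [Fintype ι] [Fintype κ] {e : ι → V}
    {f : κ → V} (he : LinearIndependent K e) (hf : LinearIndependent K f)
    (h : finrank K V < Fintype.card ι + Fintype.card κ) :
    ∃ v, v ≠ 0 ∧ v ∈ span K (Set.range e) ∧ v ∈ span K (Set.range f) := by
  have hdisj : ¬ Disjoint (span K (Set.range e)) (span K (Set.range f)) := fun hd => by
    have := Submodule.finrank_add_finrank_le_of_disjoint hd
    rw [finrank_span_eq_card he, finrank_span_eq_card hf] at this
    omega
  simp only [Submodule.disjoint_def, not_forall] at hdisj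
  obtain ⟨v, hve, hvf, hv0⟩ := hdisj
  exact ⟨v, hv0, hve, hvf⟩

theorem ContinuousLinearMap.abs_inner_apply_self_le (T : E →L[ℝ] E) (v : E) :
    |⟪T v, v⟫| ≤ ‖T‖ * ‖v‖ ^ 2 :=
  calc |⟪T v, v⟫| ≤ ‖T v‖ * ‖v‖ := abs_real_inner_le_norm _ _
    _ ≤ ‖T‖ * ‖v‖ * ‖v‖ := by gcongr; exact T.le_opNorm v
    _ = ‖T‖ * ‖v‖ ^ 2 := by ring

namespace LinearMap.IsSymmetric

variable [FiniteDimensional ℝ E] {n : ℕ} {T : E →ₗ[ℝ] E}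

theorem eigenvalues_eq_of_charpoly_eq_prod (hT : T.IsSymmetric) (hn : finrank ℝ E = n)
    {θ : Fin n → ℝ} (hθ : Antitone θ) (h : T.charpoly = ∏ i, (X - C (θ i))) :
    hT.eigenvalues hn = θ := by
  have hprod : ∏ i, (X - C (θ i)) = ((univ.val.map θ).map fun a => X - C a).prod := by
    rw [Multiset.map_map]; rfl
  have hroots := hT.roots_charpoly_eq_eigenvalues hn
  rw [h, hprod, roots_multiset_prod_X_sub_C, Fin.univ_val_map, Fin.univ_val_map,
    Multiset.coe_eq_coe, RCLike.ofReal_real_eq_id, Function.id_comp] at hroots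
  exact List.ofFn_injective (hroots.symm.eq_of_sortedGE
    (hT.eigenvalues_antitone hn).sortedGE_ofFn hθ.sortedGE_ofFn)

theorem inner_apply_eigenvectorBasis (hT : T.IsSymmetric) (hn : finrank ℝ E = n) (i : Fin n) :
    ⟪T (hT.eigenvectorBasis hn i), hT.eigenvectorBasis hn i⟫ = hT.eigenvalues hn i := by
  simp [real_inner_smul_left, (hT.eigenvectorBasis hn).orthonormal.1 i]

theorem eigenvalues_zero_eq (hT : T.IsSymmetric) (hn : finrank ℝ E = n + 1) {c : ℝ}
    (hc : HasEigenvalue T c) (h : ∀ v, ⟪T v, v⟫ ≤ c * ‖v‖ ^ 2) :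
    hT.eigenvalues hn 0 = c := by
  obtain ⟨i, hi⟩ := hT.exists_eigenvalues_eq hn hc
  refine le_antisymm ?_ (hi ▸ hT.eigenvalues_antitone hn (Fin.zero_le i))
  have := h (hT.eigenvectorBasis hn 0)
  rwa [hT.inner_apply_eigenvectorBasis, (hT.eigenvectorBasis hn).orthonormal.1, one_pow,
    mul_one] at this

theorem eigenvalues_last_eq (hT : T.IsSymmetric) (hn : finrank ℝ E = n + 1) {c : ℝ}
    (hc : HasEigenvalue T c) (h : ∀ v, c * ‖v‖ ^ 2 ≤ ⟪T v, v⟫) :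
    hT.eigenvalues hn (Fin.last n) = c := by
  obtain ⟨i, hi⟩ := hT.exists_eigenvalues_eq hn hc
  refine le_antisymm (hi ▸ hT.eigenvalues_antitone hn (Fin.le_last i)) ?_
  have := h (hT.eigenvectorBasis hn (Fin.last n))
  rwa [hT.inner_apply_eigenvectorBasis, (hT.eigenvectorBasis hn).orthonormal.1, one_pow,
    mul_one] at this

theorem exists_common_eigenvector_of_inner_sub_le {A B : E →ₗ[ℝ] E} (hA : A.IsSymmetric)
    (hB : B.IsSymmetric) (hn : finrank ℝ E = n) (k : Fin n)
    (h : ∀ v, ⟪(A - B) v, v⟫ ≤ (hA.eigenvalues hn k - hB.eigenvalues hn k) * ‖v‖ ^ 2) :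
    ∃ v, v ≠ 0 ∧ A v = hA.eigenvalues hn k • v ∧ B v = hB.eigenvalues hn k • v := by
  set α := hA.eigenvalues hn
  set β := hB.eigenvalues hn
  let eA : Finset.Iic k → E := fun i => hA.eigenvectorBasis hn i
  let eB : Finset.Ici k → E := fun i => hB.eigenvectorBasis hn i
  have heA : Orthonormal ℝ eA := (hA.eigenvectorBasis hn).orthonormal.comp _ Subtype.val_injective
  have heB : Orthonormal ℝ eB := (hB.eigenvectorBasis hn).orthonormal.comp _ Subtype.val_injective
  obtain ⟨v, hv0, hvA, hvB⟩ :=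
    heA.linearIndependent.exists_ne_zero_mem_span_inter heB.linearIndependent <| by
      rw [Fintype.card_coe, Fintype.card_coe, Fin.card_Iic, Fin.card_Ici, hn]
      omega
  have hPdiag : ∀ i, (A - α k • 1) (eA i) = (α i - α k) • eA i := fun i => by
    simp [eA, α, sub_smul]
  have hPnn : ∀ i : Finset.Iic k, 0 ≤ α i - α k := fun i =>
    sub_nonneg.2 (hA.eigenvalues_antitone hn (Finset.mem_Iic.1 i.2))
  have hQdiag : ∀ i, (β k • 1 - B) (eB i) = (β k - β i) • eB i := fun i => by
    simp [eB, β, sub_smul]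
  have hQnn : ∀ i : Finset.Ici k, 0 ≤ β k - β i := fun i =>
    sub_nonneg.2 (hB.eigenvalues_antitone hn (Finset.mem_Ici.1 i.2))
  have hP := heA.inner_apply_self_nonneg_of_mem_span hPdiag hPnn hvA
  have hQ := heB.inner_apply_self_nonneg_of_mem_span hQdiag hQnn hvB
  have hsum : ⟪(A - α k • 1) v, v⟫ + ⟪(β k • 1 - B) v, v⟫
      = ⟪(A - B) v, v⟫ - (α k - β k) * ‖v‖ ^ 2 := by
    simp only [LinearMap.sub_apply, LinearMap.smul_apply, Module.End.one_apply, inner_sub_left,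
      real_inner_smul_left, real_inner_self_eq_norm_sq]
    ring
  have hPv := heA.apply_eq_zero_of_inner_apply_self_eq_zero hPdiag hPnn hvA
    (by linarith [h v])
  have hQv := heB.apply_eq_zero_of_inner_apply_self_eq_zero hQdiag hQnn hvB
    (by linarith [h v])
  refine ⟨v, hv0, ?_, ?_⟩
  · simpa [sub_eq_zero] using hPv
  · exact (sub_eq_zero.1 (by simpa using hQv)).symm

theorem exists_common_eigenvector_of_abs_eq_opNorm {A B : E →ₗ[ℝ] E} (hA : A.IsSymmetric)
    (hB : B.IsSymmetric) (hn : finrank ℝ E = n + 1) (k : Fin (n + 1))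
    (h : |hA.eigenvalues hn k - hB.eigenvalues hn k| = ‖(A - B).toContinuousLinearMap‖) :
    ∃ v, v ≠ 0 ∧
      ((A - B) v = (hA.sub hB).eigenvalues hn 0 • v ∨
        (A - B) v = (hA.sub hB).eigenvalues hn (Fin.last n) • v) ∧
      A v = hA.eigenvalues hn k • v ∧ B v = hB.eigenvalues hn k • v := by
  set α := hA.eigenvalues hn
  set β := hB.eigenvalues hn
  have hbound (v : E) : |⟪(A - B) v, v⟫| ≤ |α k - β k| * ‖v‖ ^ 2 :=
    h ▸ (A - B).toContinuousLinearMap.abs_inner_apply_self_le v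
  rcases le_total (β k) (α k) with hle | hle
  · have hD (v : E) : ⟪(A - B) v, v⟫ ≤ (α k - β k) * ‖v‖ ^ 2 := by
      simpa [abs_of_nonneg (sub_nonneg.2 hle)] using (abs_le.1 (hbound v)).2
    obtain ⟨v, hv0, hAv, hBv⟩ := exists_common_eigenvector_of_inner_sub_le hA hB hn k hD
    have hDv : (A - B) v = (α k - β k) • v := by rw [LinearMap.sub_apply, hAv, hBv, sub_smul]
    refine ⟨v, hv0, Or.inl ?_, hAv, hBv⟩
    rw [(hA.sub hB).eigenvalues_zero_eq hn
      (hasEigenvalue_of_hasEigenvector ⟨mem_eigenspace_iff.2 hDv, hv0⟩) hD, hDv]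
  · have hD (v : E) : (α k - β k) * ‖v‖ ^ 2 ≤ ⟪(A - B) v, v⟫ := by
      have := (abs_le.1 (hbound v)).1
      rw [abs_of_nonpos (sub_nonpos.2 hle)] at this
      linarith
    have hD' (v : E) : ⟪(B - A) v, v⟫ ≤ (β k - α k) * ‖v‖ ^ 2 := by
      simp only [LinearMap.sub_apply, inner_sub_left] at hD ⊢
      linarith [hD v]
    obtain ⟨v, hv0, hBv, hAv⟩ := exists_common_eigenvector_of_inner_sub_le hB hA hn k hD'
    have hDv : (A - B) v = (α k - β k) • v := by rw [LinearMap.sub_apply, hAv, hBv, sub_smul]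
    refine ⟨v, hv0, Or.inr ?_, hAv, hBv⟩
    rw [(hA.sub hB).eigenvalues_last_eq hn
      (hasEigenvalue_of_hasEigenvector ⟨mem_eigenspace_iff.2 hDv, hv0⟩) hD, hDv]

end LinearMap.IsSymmetric

theorem Matrix.charpoly_toEuclideanLin {𝕜 ι : Type*} [RCLike 𝕜] [Fintype ι] [DecidableEq ι]
    (A : Matrix ι ι 𝕜) : (toEuclideanLin A).charpoly = A.charpoly := by
  rw [toEuclideanLin_eq_toLin_orthonormal, charpoly_toLin]

theorem eigenvalue_stability_equality_case
    {m : ℕ} (A B : Matrix (Fin (m + 1)) (Fin (m + 1)) ℝ)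
    (hA : A.IsSymm) (hB : B.IsSymm)
    -- `θA ℓ` is the `ℓ`-th largest eigenvalue of `A` (with multiplicity), likewise for
    -- `B` and for `D = A - B`
    (θA θB θD : Fin (m + 1) → ℝ)
    (hθA : Antitone θA) (hθB : Antitone θB) (hθD : Antitone θD)
    (hAeig : A.charpoly = ∏ ℓ : Fin (m + 1), (X - C (θA ℓ)))
    (hBeig : B.charpoly = ∏ ℓ : Fin (m + 1), (X - C (θB ℓ)))
    (hDeig : (A - B).charpoly = ∏ ℓ : Fin (m + 1), (X - C (θD ℓ)))
    (ℓ : Fin (m + 1))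
    (heq : |θA ℓ - θB ℓ| = opNorm (A - B)) :
    ∃ v : Fin (m + 1) → ℝ, v ≠ 0 ∧
      v ∈ (Module.End.eigenspace (Matrix.mulVecLin (A - B)) (θD 0) ⊔
            Module.End.eigenspace (Matrix.mulVecLin (A - B)) (θD (Fin.last m))) ∧
      A.mulVec v = θA ℓ • v ∧ B.mulVec v = θB ℓ • v := by
  have hn : finrank ℝ (EuclideanSpace ℝ (Fin (m + 1))) = m + 1 := finrank_euclideanSpace_fin
  have hA' := isSymmetric_toEuclideanLin_iff.2 (isHermitian_iff_isSymm.2 hA)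
  have hB' := isSymmetric_toEuclideanLin_iff.2 (isHermitian_iff_isSymm.2 hB)
  obtain rfl : hA'.eigenvalues hn = θA := hA'.eigenvalues_eq_of_charpoly_eq_prod hn hθA
    (by rw [charpoly_toEuclideanLin, hAeig])
  obtain rfl : hB'.eigenvalues hn = θB := hB'.eigenvalues_eq_of_charpoly_eq_prod hn hθB
    (by rw [charpoly_toEuclideanLin, hBeig])
  obtain rfl : (hA'.sub hB').eigenvalues hn = θD := (hA'.sub hB').eigenvalues_eq_of_charpoly_eq_prod
    hn hθD (by rw [← map_sub, charpoly_toEuclideanLin, hDeig])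
  obtain ⟨v, hv0, hvD, hvA, hvB⟩ :=
    hA'.exists_common_eigenvector_of_abs_eq_opNorm hB' hn ℓ (by rw [heq, opNorm, map_sub])
  refine ⟨WithLp.ofLp v, by simpa using hv0, ?_, congrArg WithLp.ofLp hvA,
    congrArg WithLp.ofLp hvB⟩
  rcases hvD with hvD | hvD
  · exact mem_sup_left <| mem_eigenspace_iff.2 <| by
      simpa [sub_mulVec] using congrArg WithLp.ofLp hvD
  · exact mem_sup_right <| mem_eigenspace_iff.2 <| by
      simpa [sub_mulVec] using congrArg WithLp.ofLp hvD
end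

section
/- Let i and j be cospectral vertices in a graph G (i.e., φ^{G\i} = φ^{G\j}). Then (φ^{G\i} - Σ_{P:i→j} φ^{G\P})·(φ^{G\i} + Σ_{P:i→j} φ^{G\P}) = φ^G · φ^{G\{i,j}}. -/
/-!
Write `M = xI - A` for the characteristic matrix of `G`. Expanding `det M` with row `j`
replaced by the unit row `e_i` along row `i`, and recursing over the growing set of deleted
vertices, shows that the path sum `Σ_P φ(G ∖ P)` is the entry `adj(M) i j` (Godsil).
The Desnanot–Jacobi identity
`det M · det M[{i,j}ᶜ] = adj(M) i i · adj(M) j j - adj(M) i j · adj(M) j i`,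
in which `adj(M) i i = φ(G ∖ i)` and `adj(M)` is symmetric, then reads
`φ(G) φ(G ∖ {i,j}) = φ(G ∖ i) φ(G ∖ j) - (Σ_P φ(G ∖ P))²`,
and cospectrality of `i` and `j` turns the right-hand side into the product of the two factors.
-/

open Polynomial Matrix Finset

/-- Characteristic polynomial (over ℝ) of the adjacency matrix of the induced subgraph of `G`
obtained by deleting the vertices in `S`. -/
noncomputable def phiDel {V : Type*} [Fintype V] [DecidableEq V]
    (G : SimpleGraph V) [DecidableRel G.Adj] (S : Finset V) : Polynomial ℝ :=
  ((G.adjMatrix ℝ).submatrix (Subtype.val : {v // v ∉ S} → V) Subtype.val).charpoly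

/-- The sum, over all paths `P` from `i` to `j` in `G`, of the characteristic polynomial of
the graph obtained from `G` by deleting all vertices of `P`. -/
noncomputable def pathSum {V : Type*} [Fintype V] [DecidableEq V]
    (G : SimpleGraph V) [DecidableRel G.Adj] (i j : V) : Polynomial ℝ :=
  ∑ P : G.Path i j, phiDel G P.1.support.toFinset

namespace Matrix

section Delete

variable {n α : Type*}

def delete (M : Matrix n n α) (S : Finset n) : Matrix {a // a ∉ S} {a // a ∉ S} α :=
  M.submatrix Subtype.val Subtype.val

variable [DecidableEq n]

def subtypeComplInsertEquiv {S : Finset n} {i : n} (hi : i ∉ S) :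
    {w : {a // a ∉ S} // w ∉ ({⟨i, hi⟩} : Finset _)} ≃ {a // a ∉ insert i S} where
  toFun w := ⟨w.1, by simpa [Subtype.ext_iff, w.1.2] using w.2⟩
  invFun a := ⟨⟨a, fun h => a.2 (mem_insert_of_mem h)⟩, by
    simpa [Subtype.ext_iff] using fun h : (a : n) = i => a.2 (by simp [h])⟩
  left_inv _ := rfl
  right_inv _ := rfl

theorem delete_delete_singleton (M : Matrix n n α) {S : Finset n} {i : n} (hi : i ∉ S) :
    (M.delete S).delete {⟨i, hi⟩} =
      (M.delete (insert i S)).submatrix (subtypeComplInsertEquiv hi) (subtypeComplInsertEquiv hi) :=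
  rfl

theorem det_submatrix_pair [CommRing α] (M : Matrix n n α) {i j : n} (hij : i ≠ j) :
    (M.submatrix (Subtype.val : {a // a ∈ ({i, j} : Finset n)} → n) Subtype.val).det =
      M i i * M j j - M i j * M j i := by
  let e : Fin 2 ≃ {a // a ∈ ({i, j} : Finset n)} :=
    Equiv.ofBijective ![⟨i, by simp⟩, ⟨j, by simp⟩] <| by
      rw [Fintype.bijective_iff_injective_and_card]
      refine ⟨fun a b => ?_, by simp only [Fintype.card_fin, Fintype.card_coe, card_pair hij]⟩
      fin_cases a <;> fin_cases b <;> simp [hij, hij.symm]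
  rw [← det_submatrix_equiv_self e, det_fin_two]
  rfl

end Delete

variable {n R : Type*} [Fintype n] [DecidableEq n] [CommRing R]

theorem det_eq_det_submatrix_of_row_eq_single (p : n → Prop) [DecidablePred p]
    (M : Matrix n n R) (h : ∀ r, ¬ p r → M r = Pi.single r 1) :
    M.det = (M.submatrix (Subtype.val : {a // p a} → n) Subtype.val).det := by
  rw [← det_submatrix_equiv_self (Equiv.sumCompl p) M]
  have hblocks : M.submatrix (Equiv.sumCompl p) (Equiv.sumCompl p) =
      fromBlocks (M.submatrix Subtype.val Subtype.val) (M.submatrix Subtype.val Subtype.val)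
        0 1 := by
    ext (a | a) (b | b)
    · rfl
    · rfl
    · have hba : (b : n) ≠ a := fun hba => a.2 (hba ▸ b.2)
      simp [h a.1 a.2, hba]
    · simp [h a.1 a.2, Pi.single_apply, one_apply, Subtype.ext_iff, eq_comm]
  rw [hblocks, det_fromBlocks_zero₂₁, det_one, mul_one]

theorem adjugate_apply_self (M : Matrix n n R) (i : n) : M.adjugate i i = (M.delete {i}).det := by
  rw [adjugate_apply, det_eq_det_submatrix_of_row_eq_single (· ∉ ({i} : Finset n))]
  · congr 1
    ext a b
    rw [submatrix_apply, updateRow_ne (by simpa using a.2)]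
    rfl
  · intro r hr
    obtain rfl : r = i := by simpa using hr
    exact updateRow_self

theorem adjugate_apply_of_ne (M : Matrix n n R) {i j : n} (hij : i ≠ j) :
    M.adjugate i j = -∑ k : {a // a ∉ ({i} : Finset n)},
      M i k * (M.delete {i}).adjugate k ⟨j, by simpa using hij.symm⟩ := by
  set N := M.updateRow j (Pi.single i 1)
  have hdiag : (N.updateRow i (Pi.single i 1)).det = 0 :=
    det_zero_of_row_eq hij (by simp [N, updateRow_ne hij.symm])
  have hoff (k : {a // a ∉ ({i} : Finset n)}) : (N.updateRow i (Pi.single k 1)).det =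
      -(M.delete {i}).adjugate k ⟨j, by simpa using hij.symm⟩ := by
    -- swapping rows `i` and `j` moves the unit row `e_i` to row `i`, where it can be stripped
    have hswap : ((N.updateRow i (Pi.single k 1)).submatrix (Equiv.swap i j) id).det =
        -(N.updateRow i (Pi.single k 1)).det := by
      rw [det_permute, Equiv.Perm.sign_swap hij]
      simp
    rw [adjugate_apply, ← neg_eq_iff_eq_neg, ← hswap,
      det_eq_det_submatrix_of_row_eq_single (· ∉ ({i} : Finset n))]
    · congr 1
      ext a b
      have hai : (a : n) ≠ i := by simpa using a.2
      by_cases haj : (a : n) = j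
      · obtain ⟨a, ha⟩ := a
        subst haj
        simp [N, Pi.single_apply, Subtype.ext_iff]
      · simp [N, delete, haj, hai, Equiv.swap_apply_of_ne_of_ne, Subtype.ext_iff]
    · intro r hr
      obtain rfl : r = i := by simpa using hr
      funext c
      simp [N, updateRow_ne hij.symm]
  have hsplit (f : n → R) : ∑ k, f k = f i + ∑ k : {a // a ∉ ({i} : Finset n)}, f k := by
    rw [← Fintype.sum_subtype_add_sum_subtype (· ∈ ({i} : Finset n))]
    simp
  rw [adjugate_apply, det_eq_sum_mul_adjugate_row _ i, hsplit, adjugate_apply, hdiag, mul_zero,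
    zero_add, ← sum_neg_distrib]
  refine Fintype.sum_congr _ _ fun k => ?_
  rw [adjugate_apply, hoff, updateRow_ne hij]
  ring

theorem adjugate_delete_apply_self (M : Matrix n n R) {S : Finset n} {i : n} (hi : i ∉ S) :
    (M.delete S).adjugate ⟨i, hi⟩ ⟨i, hi⟩ = (M.delete (insert i S)).det := by
  rw [adjugate_apply_self, delete_delete_singleton, det_submatrix_equiv_self]

theorem adjugate_delete_apply_of_ne (M : Matrix n n R) {S : Finset n} {i j : n} (hij : i ≠ j)
    (hi : i ∉ S) (hj : j ∉ S) :
    (M.delete S).adjugate ⟨i, hi⟩ ⟨j, hj⟩ = -∑ k : {a // a ∉ insert i S},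
      M i k * (M.delete (insert i S)).adjugate k ⟨j, by simp [hij.symm, hj]⟩ := by
  rw [adjugate_apply_of_ne _ (by simpa using hij), delete_delete_singleton,
    adjugate_submatrix_equiv_self]
  congr 1
  exact Fintype.sum_equiv (subtypeComplInsertEquiv hi) _ _ fun k => rfl

theorem det_mul_adjugate_minor_pair (M : Matrix n n R) {i j : n} (hij : i ≠ j) :
    M.det * (M.adjugate i i * M.adjugate j j - M.adjugate i j * M.adjugate j i) =
      M.det ^ 2 * (M.delete {i, j}).det := by
  -- compute `det (K * M) = det K * det M` for this `K`, using `adj M * M = det M • 1`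
  set K := (1 : Matrix n n R).updateRow i (M.adjugate i) |>.updateRow j (M.adjugate j)
  have hrow (k : n) : M.adjugate k ᵥ* M = M.det • Pi.single k 1 := by
    funext c
    simp [← mul_apply_eq_vecMul, adjugate_mul, one_eq_pi_single]
  have hKM : K * M =
      (M.updateRow i (M.det • Pi.single i 1)).updateRow j (M.det • Pi.single j 1) := by
    simp only [K, updateRow_mul, one_mul, hrow]
  have hK : K.det = M.adjugate i i * M.adjugate j j - M.adjugate i j * M.adjugate j i := by
    rw [det_eq_det_submatrix_of_row_eq_single (· ∈ ({i, j} : Finset n))]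
    · convert det_submatrix_pair K hij using 2
      all_goals simp [K, updateRow_ne hij]
    · intro r hr
      simp only [mem_insert, mem_singleton, not_or] at hr
      funext c
      simp [K, updateRow_ne hr.1, updateRow_ne hr.2, one_eq_pi_single]
  have hstrip : ((M.updateRow j (Pi.single j 1)).updateRow i (Pi.single i 1)).det =
      (M.delete {i, j}).det := by
    rw [det_eq_det_submatrix_of_row_eq_single (· ∉ ({i, j} : Finset n))]
    · congr 1
      ext a b
      have ha : (a : n) ≠ i ∧ (a : n) ≠ j := by simpa using a.2
      simp [delete, updateRow_ne ha.1, updateRow_ne ha.2]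
    · intro r hr
      obtain rfl | rfl : r = i ∨ r = j := by
        simpa only [not_not, mem_insert, mem_singleton] using hr
      · exact updateRow_self
      · rw [updateRow_ne hij.symm, updateRow_self]
  have hdetKM :
      ((M.updateRow i (M.det • Pi.single i 1)).updateRow j (M.det • Pi.single j 1)).det =
        M.det ^ 2 * (M.delete {i, j}).det := by
    rw [det_updateRow_smul, updateRow_comm _ hij, det_updateRow_smul, hstrip, sq, mul_assoc]
  rw [← hK, ← hdetKM, ← hKM, det_mul, mul_comm]

theorem adjugate_minor_pair (M : Matrix n n R) {i j : n} (hij : i ≠ j) :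
    M.adjugate i i * M.adjugate j j - M.adjugate i j * M.adjugate j i =
      M.det * (M.delete {i, j}).det := by
  -- cancel `det` in the generic matrix, whose determinant is a nonzero polynomial
  let X := mvPolynomialX n n ℤ
  have hX : X.adjugate i i * X.adjugate j j - X.adjugate i j * X.adjugate j i =
      X.det * (X.delete {i, j}).det := by
    apply mul_left_cancel₀ (det_mvPolynomialX_ne_zero n ℤ)
    rw [det_mul_adjugate_minor_pair X hij]
    ring
  obtain ⟨f, rfl⟩ : ∃ f : MvPolynomial (n × n) ℤ →+* R, X.map f = M :=
    ⟨_, mvPolynomialX_mapMatrix_aeval ℤ M⟩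
  have hadj (a b : n) : f (X.adjugate a b) = (X.map f).adjugate a b := by
    rw [← RingHom.mapMatrix_apply, ← RingHom.map_adjugate]
    rfl
  simpa only [map_sub, map_mul, hadj, RingHom.map_det, RingHom.mapMatrix_apply, delete,
    submatrix_map] using congrArg f hX

theorem det_mul_det_delete_pair (M : Matrix n n R) {i j : n} (hij : i ≠ j) :
    M.det * (M.delete {i, j}).det =
      (M.delete {i}).det * (M.delete {j}).det - M.adjugate i j * M.adjugate j i := by
  rw [← adjugate_minor_pair M hij, adjugate_apply_self, adjugate_apply_self]

theorem charmatrix_submatrix {m n R : Type*} [Fintype m] [Fintype n] [DecidableEq m]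
    [DecidableEq n] [CommRing R] (A : Matrix n n R) {f : m → n} (hf : Function.Injective f) :
    charmatrix (A.submatrix f f) = (charmatrix A).submatrix f f := by
  ext a b
  simp [charmatrix_apply, diagonal_apply, hf.eq_iff]

end Matrix

section Graph

open SimpleGraph

variable {V : Type*} [Fintype V] [DecidableEq V] (G : SimpleGraph V) [DecidableRel G.Adj]

theorem phiDel_eq_det_delete (S : Finset V) :
    phiDel G S = ((charmatrix (G.adjMatrix ℝ)).delete S).det := by
  rw [phiDel, charpoly, charmatrix_submatrix _ Subtype.val_injective]
  rfl

theorem phiDel_empty : phiDel G ∅ = (charmatrix (G.adjMatrix ℝ)).det := by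
  rw [phiDel_eq_det_delete]
  exact det_submatrix_equiv_self (Equiv.subtypeUnivEquiv fun v => notMem_empty v) _

noncomputable def pathSumAvoiding (S : Finset V) (i j : V) : ℝ[X] :=
  ∑ P : G.Path i j with ∀ v ∈ P.1.support, v ∉ S, phiDel G (S ∪ P.1.support.toFinset)

theorem pathSumAvoiding_empty (i j : V) : pathSumAvoiding G ∅ i j = pathSum G i j := by
  simp [pathSumAvoiding, pathSum]

theorem pathSumAvoiding_of_mem {S : Finset V} {i : V} (hi : i ∈ S) (j : V) :
    pathSumAvoiding G S i j = 0 :=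
  sum_eq_zero fun P hP => absurd hi ((mem_filter.mp hP).2 i P.1.start_mem_support)

theorem pathSumAvoiding_self {S : Finset V} {i : V} (hi : i ∉ S) :
    pathSumAvoiding G S i i = phiDel G (insert i S) := by
  rw [pathSumAvoiding, sum_eq_single_of_mem Path.nil (by simp [hi])
    fun P _ hP => absurd (Path.loop_eq P) hP]
  simp

theorem pathSumAvoiding_of_ne {S : Finset V} {i j : V} (hij : i ≠ j) (hi : i ∉ S) :
    pathSumAvoiding G S i j = ∑ k ∈ G.neighborFinset i, pathSumAvoiding G (insert i S) k j := by
  have hnil (P : G.Path i j) : ¬ P.1.Nil := Walk.not_nil_of_ne hij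
  rw [pathSumAvoiding, ← sum_fiberwise_of_maps_to (g := fun P : G.Path i j => P.1.snd)
    (t := G.neighborFinset i) fun P _ => by simpa using P.1.adj_snd (hnil P)]
  refine sum_congr rfl fun k hk => ?_
  rw [mem_neighborFinset] at hk
  rw [pathSumAvoiding, filter_filter]
  -- a path from `i` through its second vertex `k` is `i` followed by a path from `k` avoiding `i`
  refine (sum_bij (fun Q hQ => ⟨Walk.cons hk Q.1, Q.2.cons fun hiQ =>
      (mem_filter.mp hQ).2 i hiQ (mem_insert_self i S)⟩) ?_ ?_ ?_ ?_).symm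
  · intro Q hQ
    simp only [mem_filter, mem_univ, true_and, mem_insert, not_or] at hQ ⊢
    refine ⟨?_, Walk.snd_cons _ _⟩
    simp only [Walk.support_cons, List.mem_cons, forall_eq_or_imp]
    exact ⟨hi, fun v hv => (hQ v hv).2⟩
  · intro Q₁ _ Q₂ _ h
    simpa [Subtype.ext_iff] using h
  · rintro ⟨P, hP⟩ hPmem
    simp only [mem_filter, mem_univ, true_and] at hPmem
    obtain ⟨havoid, rfl⟩ := hPmem
    have hiP : i ∉ P.tail.support := by
      have := hP.support_nodup
      rw [← Walk.cons_support_tail (hnil ⟨P, hP⟩)] at this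
      exact (List.nodup_cons.mp this).1
    refine ⟨⟨P.tail, hP.tail⟩, ?_, Subtype.ext (Walk.cons_tail_eq P (hnil ⟨P, hP⟩))⟩
    simp only [mem_filter, mem_univ, true_and, mem_insert, not_or]
    intro v hv
    refine ⟨fun h => hiP (h ▸ hv), havoid v ?_⟩
    rw [← Walk.cons_support_tail (hnil ⟨P, hP⟩)]
    exact List.mem_cons_of_mem _ hv
  · intro Q _
    simp [Walk.support_cons, insert_union, union_insert]

theorem adjugate_charmatrix_delete_eq_pathSumAvoiding (S : Finset V) {i j : V} (hi : i ∉ S)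
    (hj : j ∉ S) :
    ((charmatrix (G.adjMatrix ℝ)).delete S).adjugate ⟨i, hi⟩ ⟨j, hj⟩ =
      pathSumAvoiding G S i j := by
  obtain rfl | hij := eq_or_ne i j
  · rw [adjugate_delete_apply_self, pathSumAvoiding_self G hi, phiDel_eq_det_delete]
  have hj' : j ∉ insert i S := by simp [hij.symm, hj]
  rw [adjugate_delete_apply_of_ne _ hij hi hj, pathSumAvoiding_of_ne G hij hi, ← sum_neg_distrib]
  calc ∑ k : {a // a ∉ insert i S}, -(charmatrix (G.adjMatrix ℝ) i k *
          ((charmatrix (G.adjMatrix ℝ)).delete (insert i S)).adjugate k ⟨j, hj'⟩)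
      = ∑ k : {a // a ∉ insert i S},
          C (G.adjMatrix ℝ i k) * pathSumAvoiding G (insert i S) k j := by
        refine Fintype.sum_congr _ _ fun k => ?_
        have hki : i ≠ k := fun h => k.2 (h ▸ mem_insert_self i S)
        rw [charmatrix_apply_ne _ _ _ hki,
          adjugate_charmatrix_delete_eq_pathSumAvoiding (insert i S) k.2 hj', neg_mul, neg_neg]
    _ = ∑ k, C (G.adjMatrix ℝ i k) * pathSumAvoiding G (insert i S) k j := by
        rw [← Fintype.sum_subtype_add_sum_subtype (· ∉ insert i S),
          Fintype.sum_eq_zero (fun k : {a // ¬a ∉ insert i S} => _) fun k => by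
            rw [pathSumAvoiding_of_mem G (not_not.mp k.2), mul_zero], add_zero]
    _ = ∑ k ∈ G.neighborFinset i, pathSumAvoiding G (insert i S) k j := by
        simp [adjMatrix_apply, neighborFinset_eq_filter, sum_filter]
termination_by #Sᶜ
decreasing_by
  rw [compl_insert]
  exact card_erase_lt_of_mem (mem_compl.mpr hi)

theorem pathSum_eq_adjugate_charmatrix (i j : V) :
    pathSum G i j = (charmatrix (G.adjMatrix ℝ)).adjugate i j := by
  have h0 (v : V) : v ∉ (∅ : Finset V) := notMem_empty v
  rw [← pathSumAvoiding_empty,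
    ← adjugate_charmatrix_delete_eq_pathSumAvoiding G ∅ (h0 i) (h0 j)]
  exact congrFun (congrFun (adjugate_submatrix_equiv_self (Equiv.subtypeUnivEquiv h0) _) _) _

end Graph

theorem cospectral_factorization {V : Type*} [Fintype V] [DecidableEq V]
    (G : SimpleGraph V) [DecidableRel G.Adj] (i j : V) (hij : i ≠ j)
    (hcospec : phiDel G {i} = phiDel G {j}) :
    (phiDel G {i} - pathSum G i j) * (phiDel G {i} + pathSum G i j) =
      phiDel G ∅ * phiDel G {i, j} := by
  have hsymm : (charmatrix (G.adjMatrix ℝ)).adjugate j i =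
      (charmatrix (G.adjMatrix ℝ)).adjugate i j := by
    have : (charmatrix (G.adjMatrix ℝ)).IsSymm := by
      rw [IsSymm, ← charmatrix_transpose, G.isSymm_adjMatrix]
    exact this.adjugate.apply i j
  have hjacobi : phiDel G {i} * phiDel G {j} - pathSum G i j * pathSum G i j =
      phiDel G ∅ * phiDel G {i, j} := by
    rw [phiDel_empty, phiDel_eq_det_delete, phiDel_eq_det_delete, phiDel_eq_det_delete,
      det_mul_det_delete_pair _ hij, hsymm, pathSum_eq_adjugate_charmatrix]
  rw [← hjacobi, ← hcospec]
  ring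
end
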